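/- Let P be a probability on ℝ^d with supp(P) = ℝ^d (or more generally with K_ε := {y : d(y,K) ≤ ε} ⊂ supp(P)), let K ⊂ interior(supp(P)) be compact and ε > 0 with K_ε ⊂ supp(P). Suppose (α_n) is a sequence of finite codebooks such that d(x, α_n) → 0 uniformly on compact subsets of supp(P), and for each n and a ∈ α_n, the Voronoi cell W(a|α_n) is star-shaped with center a. Then there exists n_{K,ε} ∈ ℕ such that for all n ≥ n_{K,ε} and all a ∈ α_n with W(a|α_n) ∩ K ≠ ∅, one has sup{‖x−a‖ : x ∈ W(a|α_n)} ≤ ε. -/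

import Mathlib

/-!
By uniform convergence on the compact set `K_ε`, for large `n` every point of `K_ε` lies within
`ε/2` of the codebook `α n`. Take a cell `W(a)` meeting `K` at `y`; then `‖y - a‖ < ε/2`. If `W(a)`
contained a point at distance `≥ ε/2` from `a`, star-shapedness would put a point `z` of the cell at
distance exactly `ε/2` from `a`. Then `z` lies within `ε` of `y ∈ K`, so `z ∈ K_ε`, and
`ε/2 = ‖z - a‖ = d(z, α n) < ε/2`. Hence every cell meeting `K` even has radius `< ε/2`.
-/

open MeasureTheory Metric

/-- The support of a Borel measure. -/
def msupport {d : ℕ} (P : Measure (EuclideanSpace ℝ (Fin d))) : Set (EuclideanSpace ℝ (Fin d)) :=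
  {x | ∀ ε > 0, 0 < P (ball x ε)}

theorem IsCompact.isCompact_setOf_infDist_le {X : Type*} [PseudoMetricSpace X] [ProperSpace X]
    {K : Set X} (hK : IsCompact K) (hne : K.Nonempty) (δ : ℝ) :
    IsCompact {y | infDist y K ≤ δ} := by
  refine (hK.cthickening (r := δ)).of_isClosed_subset
    (isClosed_le (continuous_infDist_pt K) continuous_const) fun y hy => ?_
  obtain ⟨y₀, hy₀, hdist⟩ := hK.exists_infDist_eq_dist hne y
  exact mem_cthickening_of_dist_le y y₀ δ K hy₀ (hdist ▸ hy)

theorem StarConvex.exists_mem_norm_sub_eq {E : Type*} [SeminormedAddCommGroup E] [NormedSpace ℝ E]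
    {W : Set E} {a x : E} (hW : StarConvex ℝ a W) (hx : x ∈ W) {r : ℝ} (hr₀ : 0 ≤ r)
    (hr : r ≤ ‖x - a‖) : ∃ z ∈ W, ‖z - a‖ = r := by
  rcases (norm_nonneg (x - a)).eq_or_lt with h0 | hpos
  · exact ⟨x, hx, by linarith⟩
  set t := r / ‖x - a‖
  have ht : t ∈ Set.Icc (0 : ℝ) 1 := ⟨by positivity, div_le_one_of_le₀ hr (norm_nonneg _)⟩
  refine ⟨a + t • (x - a), hW.segment_subset hx (segment_eq_image' ℝ a x ▸ ⟨t, ht, rfl⟩), ?_⟩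
  rw [add_sub_cancel_left, norm_smul, Real.norm_of_nonneg ht.1, div_mul_cancel₀ _ hpos.ne']

section Voronoi

variable {E : Type*} [SeminormedAddCommGroup E]

/-- The closed Voronoi cell `W(a | α)`; `a` need not belong to `α`. -/
def voronoiCell (α : Set E) (a : E) : Set E :=
  {x | ‖x - a‖ = infDist x α}

@[simp]
theorem mem_voronoiCell {α : Set E} {a x : E} : x ∈ voronoiCell α a ↔ ‖x - a‖ = infDist x α :=
  Iff.rfl

theorem norm_sub_lt_of_mem_voronoiCell [NormedSpace ℝ E] {α K : Set E} {a x : E} {ε : ℝ}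
    (hε : 0 ≤ ε) (hstar : StarConvex ℝ a (voronoiCell α a))
    (hclose : ∀ z, infDist z K ≤ ε → infDist z α < ε / 2)
    (hmeet : (voronoiCell α a ∩ K).Nonempty) (hx : x ∈ voronoiCell α a) :
    ‖x - a‖ < ε / 2 := by
  obtain ⟨y, hyW, hyK⟩ := hmeet
  have hya : ‖y - a‖ < ε / 2 :=
    mem_voronoiCell.1 hyW ▸ hclose y ((infDist_zero_of_mem hyK).trans_le hε)
  by_contra! hxa
  obtain ⟨z, hzW, hza⟩ := hstar.exists_mem_norm_sub_eq hx (by positivity) hxa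
  have hzK : infDist z K ≤ ε := calc
    infDist z K ≤ dist z y := infDist_le_dist_of_mem hyK
    _ ≤ dist z a + dist y a := dist_triangle_right z y a
    _ ≤ ε := by rw [dist_eq_norm, dist_eq_norm]; linarith
  have hzα := hclose z hzK
  rw [← mem_voronoiCell.1 hzW, hza] at hzα
  exact hzα.false

end Voronoi

theorem stmt18_general (d : ℕ) (P : Measure (EuclideanSpace ℝ (Fin d)))
    (K : Set (EuclideanSpace ℝ (Fin d))) (hKcpt : IsCompact K)
    (ε : ℝ) (hε : 0 < ε)
    (hKε : {y | infDist y K ≤ ε} ⊆ msupport P)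
    (α : ℕ → Finset (EuclideanSpace ℝ (Fin d)))
    (hunif : ∀ K' : Set (EuclideanSpace ℝ (Fin d)), IsCompact K' → K' ⊆ msupport P →
      ∀ δ > (0 : ℝ), ∃ N : ℕ, ∀ n ≥ N, ∀ x ∈ K',
        infDist x ((α n : Set (EuclideanSpace ℝ (Fin d)))) < δ)
    (hstar : ∀ n : ℕ, ∀ a ∈ α n,
      ∀ x ∈ {x | ‖x - a‖ = infDist x ((α n : Set (EuclideanSpace ℝ (Fin d))))},
        segment ℝ a x ⊆ {x | ‖x - a‖ = infDist x ((α n : Set (EuclideanSpace ℝ (Fin d))))}) :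
    ∃ N : ℕ, ∀ n ≥ N, ∀ a ∈ α n,
      ({x | ‖x - a‖ = infDist x ((α n : Set (EuclideanSpace ℝ (Fin d))))} ∩ K).Nonempty →
      ∀ x ∈ {x | ‖x - a‖ = infDist x ((α n : Set (EuclideanSpace ℝ (Fin d))))},
        ‖x - a‖ ≤ ε := by
  rcases K.eq_empty_or_nonempty with rfl | hKne
  · exact ⟨0, fun n _ a _ hmeet => by simp at hmeet⟩
  obtain ⟨N, hN⟩ :=
    hunif _ (hKcpt.isCompact_setOf_infDist_le hKne ε) hKε (ε / 2) (by positivity)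
  refine ⟨N, fun n hn a ha hmeet x hx => ?_⟩
  have hcell : StarConvex ℝ a (voronoiCell (α n : Set (EuclideanSpace ℝ (Fin d))) a) :=
    starConvex_iff_segment_subset.2 (hstar n a ha)
  have := norm_sub_lt_of_mem_voronoiCell hε.le hcell (hN n hn) hmeet hx
  linarith

/-- if `K ⊆ interior(supp P)` is compact, `K_ε ⊆ supp P`, `d(·,α_n) → 0`
uniformly on compact subsets of `supp P` and Voronoi cells are star-shaped about their
centers, then for large `n` every cell meeting `K` has radius at most `ε`. -/
theorem stmt18 (d : ℕ) (P : Measure (EuclideanSpace ℝ (Fin d))) [IsProbabilityMeasure P]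
    (K : Set (EuclideanSpace ℝ (Fin d))) (hKcpt : IsCompact K)
    (hK : K ⊆ interior (msupport P))
    (ε : ℝ) (hε : 0 < ε)
    (hKε : {y | infDist y K ≤ ε} ⊆ msupport P)
    (α : ℕ → Finset (EuclideanSpace ℝ (Fin d)))
    (hunif : ∀ K' : Set (EuclideanSpace ℝ (Fin d)), IsCompact K' → K' ⊆ msupport P →
      ∀ δ > (0 : ℝ), ∃ N : ℕ, ∀ n ≥ N, ∀ x ∈ K',
        infDist x ((α n : Set (EuclideanSpace ℝ (Fin d)))) < δ)
    (hstar : ∀ n : ℕ, ∀ a ∈ α n,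
      ∀ x ∈ {x | ‖x - a‖ = infDist x ((α n : Set (EuclideanSpace ℝ (Fin d))))},
        segment ℝ a x ⊆ {x | ‖x - a‖ = infDist x ((α n : Set (EuclideanSpace ℝ (Fin d))))}) :
    ∃ N : ℕ, ∀ n ≥ N, ∀ a ∈ α n,
      ({x | ‖x - a‖ = infDist x ((α n : Set (EuclideanSpace ℝ (Fin d))))} ∩ K).Nonempty →
      ∀ x ∈ {x | ‖x - a‖ = infDist x ((α n : Set (EuclideanSpace ℝ (Fin d))))},
        ‖x - a‖ ≤ ε :=
  stmt18_general d P K hKcpt ε hε hKε α hunif hstar
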